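/- Let ω₁ ∈ ℂ∖{0}, η₁ ∈ ℂ, h ∈ ℂ, and set γ = 2ω₁h. Define v(z) = exp(η₁(−2zγ+γ²)/(2ω₁)) · θ₁((z−γ)/(2ω₁)|τ) / θ₁(z/(2ω₁)|τ) and, for g : ℂ² → ℂ, the operators (H̄₁g)(x₁,x₂) = Σ_{ε∈{1,−1}} v(εx₁+x₂)v(εx₁−x₂) g(x₁+εγ, x₂) + Σ_{ε∈{1,−1}} v(εx₂+x₁)v(εx₂−x₁) g(x₁, x₂+εγ), and (H̄₂g)(x₁,x₂) = Σ_{ε,ε′∈{1,−1}} v(εx₁+ε′x₂)·v(εx₁+ε′x₂+γ)·g(x₁+εγ, x₂+ε′γ) − 2·(H̄₁g)(x₁,x₂) + (Σ_{ε,ε′∈{1,−1}} v(εx₁+ε′x₂)·v(−εx₁−ε′x₂−γ))·g(x₁,x₂). Then for every g : ℂ² → ℂ, with f(λ₁,λ₂) := exp(−4ω₁η₁(λ₁²+λ₂²)) · g(2ω₁λ₁, 2ω₁λ₂), and every (x₁,x₂) ∈ ℂ² at which all theta denominators occurring are nonzero: exp(η₁(x₁²+x₂²)/ω₁) · (M̃₂f)(x₁/(2ω₁),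 x₂/(2ω₁)) = exp(−2η₁γ²/ω₁) · ((H̄₂ + 2H̄₁)g)(x₁,x₂). -/

import Mathlib

open Complex

/-- The Jacobi theta function θ₁(z|τ). -/
noncomputable def th1 (τ z : ℂ) : ℂ :=
  ∑' k : ℤ, exp (2 * (Real.pi : ℂ) * I *
    ((z + 1/2) * ((k : ℂ) + 1/2) + ((k : ℂ) + 1/2)^2 * τ / 2))

/-- The difference operator `M̃₂` of type `C₂`. -/
noncomputable def M2t (τ h : ℂ) (f : ℂ × ℂ → ℂ) (l : ℂ × ℂ) : ℂ :=
  (∑ ε ∈ ({1, -1} : Finset ℤ), ∑ ε' ∈ ({1, -1} : Finset ℤ),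
    th1 τ ((ε : ℂ) * l.1 + (ε' : ℂ) * l.2 - h)
      / th1 τ ((ε : ℂ) * l.1 + (ε' : ℂ) * l.2 + h)
      * f (l.1 + (ε : ℂ) * h, l.2 + (ε' : ℂ) * h))
  + (∑ ε ∈ ({1, -1} : Finset ℤ), ∑ ε' ∈ ({1, -1} : Finset ℤ),
      th1 τ ((ε : ℂ) * l.1 + (ε' : ℂ) * l.2 - h)
        * th1 τ ((ε : ℂ) * l.1 + (ε' : ℂ) * l.2 + 2 * h)
        / (th1 τ ((ε : ℂ) * l.1 + (ε' : ℂ) * l.2)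
            * th1 τ ((ε : ℂ) * l.1 + (ε' : ℂ) * l.2 + h))) * f l

/-- The coefficient function `v(z) = σ(z−γ)/σ(z)` of van Diejen's operators,
expressed through `θ₁`. -/
noncomputable def vD (τ ω₁ η₁ γ z : ℂ) : ℂ :=
  exp (η₁ * (-(2 * z * γ) + γ^2) / (2 * ω₁))
    * th1 τ ((z - γ) / (2 * ω₁)) / th1 τ (z / (2 * ω₁))

/-- Van Diejen's first difference operator `H̄₁` (with the special parameters
`μ = −γ`, `μ_r = μ_r′ = 0`). -/
noncomputable def H1bar (τ ω₁ η₁ γ : ℂ) (g : ℂ × ℂ → ℂ) (x : ℂ × ℂ) : ℂ :=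
  (∑ ε ∈ ({1, -1} : Finset ℤ),
    vD τ ω₁ η₁ γ ((ε : ℂ) * x.1 + x.2) * vD τ ω₁ η₁ γ ((ε : ℂ) * x.1 - x.2)
      * g (x.1 + (ε : ℂ) * γ, x.2))
  + (∑ ε ∈ ({1, -1} : Finset ℤ),
    vD τ ω₁ η₁ γ ((ε : ℂ) * x.2 + x.1) * vD τ ω₁ η₁ γ ((ε : ℂ) * x.2 - x.1)
      * g (x.1, x.2 + (ε : ℂ) * γ))

/-- Van Diejen's second difference operator `H̄₂` (with the special parameters
`μ = −γ`, `μ_r = μ_r′ = 0`). -/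
noncomputable def H2bar (τ ω₁ η₁ γ : ℂ) (g : ℂ × ℂ → ℂ) (x : ℂ × ℂ) : ℂ :=
  (∑ ε ∈ ({1, -1} : Finset ℤ), ∑ ε' ∈ ({1, -1} : Finset ℤ),
    vD τ ω₁ η₁ γ ((ε : ℂ) * x.1 + (ε' : ℂ) * x.2)
      * vD τ ω₁ η₁ γ ((ε : ℂ) * x.1 + (ε' : ℂ) * x.2 + γ)
      * g (x.1 + (ε : ℂ) * γ, x.2 + (ε' : ℂ) * γ))
  - 2 * H1bar τ ω₁ η₁ γ g x
  + (∑ ε ∈ ({1, -1} : Finset ℤ), ∑ ε' ∈ ({1, -1} : Finset ℤ),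
      vD τ ω₁ η₁ γ ((ε : ℂ) * x.1 + (ε' : ℂ) * x.2)
        * vD τ ω₁ η₁ γ (-((ε : ℂ) * x.1) - (ε' : ℂ) * x.2 - γ)) * g x

/-!
Put `z = 2ω₁w` and `γ = 2ω₁h`. Then `v(2ω₁w) = exp(2ω₁η₁h(h - 2w)) θ(w - h)/θ(w)`, so along every
shift of `H̄₂` the product `v(z)v(z + γ)` collapses to `exp(-8ω₁η₁hw) θ(w - h)/θ(w + h)`, and this
Gaussian factor is exactly what conjugation by `exp(-4ω₁η₁|λ|²)` produces. As `θ` is odd,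
`v(z)v(-z - γ)` is `exp(8ω₁η₁h²)` times the constant coefficient of `M̃₂`. The `H̄₁` terms cancel
in `H̄₂ + 2H̄₁`.
-/

theorem th1_neg (τ z : ℂ) : th1 τ (-z) = -th1 τ z := by
  unfold th1
  rw [← tsum_neg, ← (Equiv.subLeft (-1 : ℤ)).tsum_eq]
  refine tsum_congr fun k => ?_
  -- reindexing `k ↦ -1 - k` turns `z` into `-z` at the cost of a factor `exp (π i) = -1`
  have hexp : 2 * (Real.pi : ℂ) * I *
      ((-z + 1/2) * (((-1 - k : ℤ) : ℂ) + 1/2) + (((-1 - k : ℤ) : ℂ) + 1/2)^2 * τ / 2)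
      = 2 * (Real.pi : ℂ) * I *
          ((z + 1/2) * ((k : ℂ) + 1/2) + ((k : ℂ) + 1/2)^2 * τ / 2)
        + ((-1 - k : ℤ) : ℂ) * (2 * (Real.pi : ℂ) * I) + (Real.pi : ℂ) * I := by
    push_cast; ring
  rw [Equiv.subLeft_apply, hexp, exp_add, exp_add, exp_int_mul_two_pi_mul_I, exp_pi_mul_I]
  ring

section Gauge

variable {τ ω₁ η₁ h : ℂ}

theorem vD_two_mul_mul (hω₁ : ω₁ ≠ 0) (w : ℂ) :
    vD τ ω₁ η₁ (2 * ω₁ * h) (2 * ω₁ * w)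
      = exp (2 * ω₁ * η₁ * h * (h - 2 * w)) * th1 τ (w - h) / th1 τ w := by
  have hexp : η₁ * (-(2 * (2 * ω₁ * w) * (2 * ω₁ * h)) + (2 * ω₁ * h)^2) / (2 * ω₁)
      = 2 * ω₁ * η₁ * h * (h - 2 * w) := by
    field_simp; ring
  have h2ω₁ : 2 * ω₁ ≠ 0 := mul_ne_zero two_ne_zero hω₁
  rw [vD, hexp, ← mul_sub, mul_div_cancel_left₀ _ h2ω₁, mul_div_cancel_left₀ _ h2ω₁]

theorem vD_mul_vD_add (hω₁ : ω₁ ≠ 0) {w : ℂ} (hw : th1 τ w ≠ 0) :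
    vD τ ω₁ η₁ (2 * ω₁ * h) (2 * ω₁ * w) * vD τ ω₁ η₁ (2 * ω₁ * h) (2 * ω₁ * w + 2 * ω₁ * h)
      = exp (-(8 * ω₁ * η₁ * h * w)) * (th1 τ (w - h) / th1 τ (w + h)) := by
  rw [← mul_add, vD_two_mul_mul hω₁, vD_two_mul_mul hω₁, add_sub_cancel_right,
    show -(8 * ω₁ * η₁ * h * w) = 2 * ω₁ * η₁ * h * (h - 2 * w)
      + 2 * ω₁ * η₁ * h * (h - 2 * (w + h)) by ring, exp_add]
  field_simp

theorem vD_mul_vD_neg_sub (hω₁ : ω₁ ≠ 0) (w : ℂ) :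
    vD τ ω₁ η₁ (2 * ω₁ * h) (2 * ω₁ * w) * vD τ ω₁ η₁ (2 * ω₁ * h) (-(2 * ω₁ * w) - 2 * ω₁ * h)
      = exp (8 * ω₁ * η₁ * h ^ 2)
        * (th1 τ (w - h) * th1 τ (w + 2 * h) / (th1 τ w * th1 τ (w + h))) := by
  rw [show -(2 * ω₁ * w) - 2 * ω₁ * h = 2 * ω₁ * (-(w + h)) by ring,
    vD_two_mul_mul hω₁, vD_two_mul_mul hω₁,
    show -(w + h) - h = -(w + 2 * h) by ring, th1_neg, th1_neg,
    show 8 * ω₁ * η₁ * h ^ 2 = 2 * ω₁ * η₁ * h * (h - 2 * w)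
      + 2 * ω₁ * η₁ * h * (h - 2 * -(w + h)) by ring, exp_add]
  ring

end Gauge

theorem intCast_sq_eq_one_of_mem {ε : ℤ} (hε : ε ∈ ({1, -1} : Finset ℤ)) : (ε : ℂ) ^ 2 = 1 := by
  simp only [Finset.mem_insert, Finset.mem_singleton] at hε
  rcases hε with rfl | rfl <;> norm_num

section Conjugation

variable {τ ω₁ η₁ h γ : ℂ}

theorem exp_mul_gauge_shift (hω₁ : ω₁ ≠ 0) (hγ : γ = 2 * ω₁ * h) (g : ℂ × ℂ → ℂ) (x : ℂ × ℂ)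
    {ε ε' : ℂ} (hε : ε ^ 2 = 1) (hε' : ε' ^ 2 = 1)
    (hx : th1 τ ((ε * x.1 + ε' * x.2) / (2 * ω₁)) ≠ 0) :
    exp (η₁ * (x.1 ^ 2 + x.2 ^ 2) / ω₁)
        * (th1 τ (ε * (x.1 / (2 * ω₁)) + ε' * (x.2 / (2 * ω₁)) - h)
          / th1 τ (ε * (x.1 / (2 * ω₁)) + ε' * (x.2 / (2 * ω₁)) + h)
          * (exp (-(4 * ω₁ * η₁ * ((x.1 / (2 * ω₁) + ε * h) ^ 2 + (x.2 / (2 * ω₁) + ε' * h) ^ 2)))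
            * g (2 * ω₁ * (x.1 / (2 * ω₁) + ε * h), 2 * ω₁ * (x.2 / (2 * ω₁) + ε' * h))))
      = exp (-(2 * η₁ * γ ^ 2 / ω₁))
        * (vD τ ω₁ η₁ γ (ε * x.1 + ε' * x.2) * vD τ ω₁ η₁ γ (ε * x.1 + ε' * x.2 + γ)
          * g (x.1 + ε * γ, x.2 + ε' * γ)) := by
  subst hγ
  set w := ε * (x.1 / (2 * ω₁)) + ε' * (x.2 / (2 * ω₁))
  have hz : ε * x.1 + ε' * x.2 = 2 * ω₁ * w := by simp only [w]; field_simp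
  have hshift (a e : ℂ) : 2 * ω₁ * (a / (2 * ω₁) + e * h) = a + e * (2 * ω₁ * h) := by
    field_simp
  have hexp : exp (η₁ * (x.1 ^ 2 + x.2 ^ 2) / ω₁)
        * exp (-(4 * ω₁ * η₁ * ((x.1 / (2 * ω₁) + ε * h) ^ 2 + (x.2 / (2 * ω₁) + ε' * h) ^ 2)))
      = exp (-(2 * η₁ * (2 * ω₁ * h) ^ 2 / ω₁)) * exp (-(8 * ω₁ * η₁ * h * w)) := by
    rw [← exp_add, ← exp_add]
    congr 1
    simp only [w]
    field_simp
    linear_combination (-16 * ω₁ ^ 2 * η₁ * h ^ 2) * (hε + hε')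
  rw [hz, mul_div_cancel_left₀ _ (mul_ne_zero two_ne_zero hω₁)] at hx
  rw [hz, hshift, hshift, vD_mul_vD_add hω₁ hx]
  linear_combination
    (th1 τ (w - h) / th1 τ (w + h) * g (x.1 + ε * (2 * ω₁ * h), x.2 + ε' * (2 * ω₁ * h))) * hexp

theorem exp_mul_gauge_self (hω₁ : ω₁ ≠ 0) (g : ℂ × ℂ → ℂ) (x : ℂ × ℂ) :
    exp (η₁ * (x.1 ^ 2 + x.2 ^ 2) / ω₁)
        * (exp (-(4 * ω₁ * η₁ * ((x.1 / (2 * ω₁)) ^ 2 + (x.2 / (2 * ω₁)) ^ 2)))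
          * g (2 * ω₁ * (x.1 / (2 * ω₁)), 2 * ω₁ * (x.2 / (2 * ω₁))))
      = g x := by
  have h2ω₁ : 2 * ω₁ ≠ 0 := mul_ne_zero two_ne_zero hω₁
  have hexp : η₁ * (x.1 ^ 2 + x.2 ^ 2) / ω₁
      + -(4 * ω₁ * η₁ * ((x.1 / (2 * ω₁)) ^ 2 + (x.2 / (2 * ω₁)) ^ 2)) = 0 := by
    field_simp; ring
  rw [← mul_assoc, ← exp_add, hexp, exp_zero, one_mul, mul_div_cancel₀ _ h2ω₁,
    mul_div_cancel₀ _ h2ω₁]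

theorem exp_mul_vD_mul_vD_neg_sub (hω₁ : ω₁ ≠ 0) (hγ : γ = 2 * ω₁ * h) (x : ℂ × ℂ) (ε ε' : ℂ) :
    exp (-(2 * η₁ * γ ^ 2 / ω₁))
        * (vD τ ω₁ η₁ γ (ε * x.1 + ε' * x.2) * vD τ ω₁ η₁ γ (-(ε * x.1) - ε' * x.2 - γ))
      = th1 τ (ε * (x.1 / (2 * ω₁)) + ε' * (x.2 / (2 * ω₁)) - h)
          * th1 τ (ε * (x.1 / (2 * ω₁)) + ε' * (x.2 / (2 * ω₁)) + 2 * h)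
        / (th1 τ (ε * (x.1 / (2 * ω₁)) + ε' * (x.2 / (2 * ω₁)))
          * th1 τ (ε * (x.1 / (2 * ω₁)) + ε' * (x.2 / (2 * ω₁)) + h)) := by
  subst hγ
  set w := ε * (x.1 / (2 * ω₁)) + ε' * (x.2 / (2 * ω₁))
  have hz : ε * x.1 + ε' * x.2 = 2 * ω₁ * w := by simp only [w]; field_simp
  rw [show -(ε * x.1) - ε' * x.2 - 2 * ω₁ * h = -(2 * ω₁ * w) - 2 * ω₁ * h by rw [← hz]; ring,
    hz, vD_mul_vD_neg_sub hω₁, ← mul_assoc, ← exp_add,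
    show -(2 * η₁ * (2 * ω₁ * h) ^ 2 / ω₁) + 8 * ω₁ * η₁ * h ^ 2 = 0 by field_simp; ring,
    exp_zero, one_mul]

theorem H2bar_add_two_mul_H1bar (g : ℂ × ℂ → ℂ) (x : ℂ × ℂ) :
    H2bar τ ω₁ η₁ γ g x + 2 * H1bar τ ω₁ η₁ γ g x
      = (∑ ε ∈ ({1, -1} : Finset ℤ), ∑ ε' ∈ ({1, -1} : Finset ℤ),
          vD τ ω₁ η₁ γ ((ε : ℂ) * x.1 + (ε' : ℂ) * x.2)
            * vD τ ω₁ η₁ γ ((ε : ℂ) * x.1 + (ε' : ℂ) * x.2 + γ)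
            * g (x.1 + (ε : ℂ) * γ, x.2 + (ε' : ℂ) * γ))
        + (∑ ε ∈ ({1, -1} : Finset ℤ), ∑ ε' ∈ ({1, -1} : Finset ℤ),
            vD τ ω₁ η₁ γ ((ε : ℂ) * x.1 + (ε' : ℂ) * x.2)
              * vD τ ω₁ η₁ γ (-((ε : ℂ) * x.1) - (ε' : ℂ) * x.2 - γ)) * g x := by
  rw [H2bar]; ring

end Conjugation

theorem stmt_10_general (τ : ℂ) (ω₁ : ℂ) (hω₁ : ω₁ ≠ 0) (η₁ h γ : ℂ)
    (hγ : γ = 2 * ω₁ * h) (g : ℂ × ℂ → ℂ) (x : ℂ × ℂ)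
    (hden : ∀ ε ∈ ({1, -1} : Finset ℤ), ∀ ε' ∈ ({1, -1} : Finset ℤ),
      th1 τ (((ε : ℂ) * x.1 + (ε' : ℂ) * x.2) / (2 * ω₁)) ≠ 0 ∧
      th1 τ (((ε : ℂ) * x.1 + (ε' : ℂ) * x.2) / (2 * ω₁) + h) ≠ 0 ∧
      th1 τ (((ε : ℂ) * x.1 + (ε' : ℂ) * x.2) / (2 * ω₁) - h) ≠ 0) :
    exp (η₁ * (x.1^2 + x.2^2) / ω₁)
        * M2t τ h (fun p => exp (-(4 * ω₁ * η₁ * (p.1^2 + p.2^2)))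
            * g (2 * ω₁ * p.1, 2 * ω₁ * p.2)) (x.1 / (2 * ω₁), x.2 / (2 * ω₁))
      = exp (-(2 * η₁ * γ^2 / ω₁))
          * (H2bar τ ω₁ η₁ γ g x + 2 * H1bar τ ω₁ η₁ γ g x) := by
  rw [H2bar_add_two_mul_H1bar, M2t, mul_add (exp _), mul_add (exp _)]
  congr 1
  · simp only [Finset.mul_sum]
    refine Finset.sum_congr rfl fun ε hε => Finset.sum_congr rfl fun ε' hε' => ?_
    exact exp_mul_gauge_shift hω₁ hγ g x (intCast_sq_eq_one_of_mem hε)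
      (intCast_sq_eq_one_of_mem hε') (hden ε hε ε' hε').1
  · rw [mul_left_comm, exp_mul_gauge_self hω₁, ← mul_assoc]
    simp only [Finset.mul_sum, exp_mul_vD_mul_vD_neg_sub hω₁ hγ]

/-- Theorem 3 ("connect"), second identity: under the gauge transformation
`φ(f)(x) = exp(η₁(x₁²+x₂²)/ω₁) f(x/2ω₁)`, the operator `M̃₂` is conjugate to
van Diejen's `H̄₂ + 2H̄₁`, up to the constant `exp(−2η₁γ²/ω₁)`. -/
theorem stmt_10 (τ : ℂ) (hτ : 0 < τ.im) (ω₁ : ℂ) (hω₁ : ω₁ ≠ 0) (η₁ h γ : ℂ)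
    (hγ : γ = 2 * ω₁ * h) (g : ℂ × ℂ → ℂ) (x : ℂ × ℂ)
    (hden : ∀ ε ∈ ({1, -1} : Finset ℤ), ∀ ε' ∈ ({1, -1} : Finset ℤ),
      th1 τ (((ε : ℂ) * x.1 + (ε' : ℂ) * x.2) / (2 * ω₁)) ≠ 0 ∧
      th1 τ (((ε : ℂ) * x.1 + (ε' : ℂ) * x.2) / (2 * ω₁) + h) ≠ 0 ∧
      th1 τ (((ε : ℂ) * x.1 + (ε' : ℂ) * x.2) / (2 * ω₁) - h) ≠ 0) :
    exp (η₁ * (x.1^2 + x.2^2) / ω₁)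
        * M2t τ h (fun p => exp (-(4 * ω₁ * η₁ * (p.1^2 + p.2^2)))
            * g (2 * ω₁ * p.1, 2 * ω₁ * p.2)) (x.1 / (2 * ω₁), x.2 / (2 * ω₁))
      = exp (-(2 * η₁ * γ^2 / ω₁))
          * (H2bar τ ω₁ η₁ γ g x + 2 * H1bar τ ω₁ η₁ γ g x) :=
  stmt_10_general τ ω₁ hω₁ η₁ h γ hγ g x hden
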